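/- arXiv:1906.06119 — 2 statements merged into one kernel-verified Lean document; each statement's English description precedes it below -/
import Mathlib

section
/- Let n ∈ ℝ³ with ‖n‖ = 1, let x_f ∈ ℝ³, and let P = { x ∈ ℝ³ : ⟨x − x_f, n⟩ = 0 } be the plane through x_f with normal n. Let μ be a nonzero finite measure on ℝ³ supported in P, absolutely continuous with respect to the 2-dimensional Hausdorff measure restricted to P, and with barycenter x_f (i.e. ∫ (x − x_f) dμ = 0). Let t ∈ ℝ³ with ⟨t, n⟩ = 0, let a, c₁ ∈ ℝ, and let ℓ : ℝ³ → ℝ be a linear map with ℓ(n) = 0. Define ψ(x) = t + a (n × (x − x_f)) + (c₁ + ℓ(x − x_f)) n. Fix any x_E ∈ ℝ³. If ∫ ψ(x) · (γ + δ × (x − x_E)) dμ(x) = 0 for all γ, δ ∈ ℝ³, then t = 0, a = 0, c₁ = 0 and ℓ = 0; in particular ψ vanishes identically. -/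
/-!
Testing against the constant fields `γ` kills the linear part of `ψ`, because `x_f` is the
barycenter of `μ`; hence `∫ ψ dμ = μ(ℝ³) (t + c₁ n)` vanishes, and `t ⊥ n` gives `t = 0`, `c₁ = 0`.
Testing against `δ × (x - x_f)` then gives `a ∫ |x - x_f|² dμ = 0` for `δ = n`, and, writing
`ℓ = ⟨w, ·⟩`, `∫ ⟨w, x - x_f⟩² dμ = 0` for `δ = w × n`. If `a ≠ 0`, resp. `w ≠ 0`, the measure `μ`
would be concentrated on the point `x_f`, resp. on the line `x_f + ℝ (n × w)` of the plane, and lines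
are `μH[2]`-null.
-/

open Matrix MeasureTheory

section Line

variable {E : Type*} [NormedAddCommGroup E] [NormedSpace ℝ E] [MeasurableSpace E] [BorelSpace E]

theorem hausdorffMeasure_two_range_line (c v : E) :
    μH[2] (Set.range fun s : ℝ => c + s • v) = 0 := by
  have hdim : dimH (Set.range fun s : ℝ => c + s • v) < (2 : NNReal) :=
    calc dimH (Set.range fun s : ℝ => c + s • v) ≤ Module.finrank ℝ ℝ :=
          ContDiff.dimH_range_le (by fun_prop)
      _ < (2 : NNReal) := by norm_num
  simpa using hausdorffMeasure_of_dimH_lt hdim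

theorem not_ae_mem_line_of_absolutelyContinuous {μ : Measure E} (hμ : μ ≠ 0) (hac : μ ≪ μH[2])
    (c v : E) : ¬ ∀ᵐ x ∂μ, ∃ s : ℝ, c + s • v = x := by
  intro hline
  have hoff : ∀ᵐ x ∂μ, x ∉ Set.range fun s : ℝ => c + s • v :=
    measure_eq_zero_iff_ae_notMem.mp (hac (hausdorffMeasure_two_range_line c v))
  refine hμ (ae_eq_bot.mp (Filter.eventually_false_iff_eq_bot.mp ?_))
  filter_upwards [hline, hoff] with x hx hx' using hx' hx

end Line

section DotProduct

variable {α ι : Type*} [Fintype ι] [MeasurableSpace α] {μ : Measure α} {f : α → ι → ℝ}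

theorem dotProduct_self_nonneg (v : ι → ℝ) : 0 ≤ v ⬝ᵥ v :=
  Finset.sum_nonneg fun i _ => mul_self_nonneg (v i)

theorem sq_dotProduct_le (v w : ι → ℝ) : (v ⬝ᵥ w) ^ 2 ≤ (v ⬝ᵥ v) * (w ⬝ᵥ w) := by
  simpa only [dotProduct, sq] using Finset.sum_mul_sq_le_sq_mul_sq Finset.univ v w

theorem eq_zero_of_add_smul_eq_zero {R : Type*} [CommRing R] {t n : ι → R} {c : R}
    (ht : t ⬝ᵥ n = 0) (hn : n ⬝ᵥ n = 1) (h : t + c • n = 0) : t = 0 ∧ c = 0 := by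
  have hc : c = 0 := by simpa [add_dotProduct, ht, hn] using congrArg (· ⬝ᵥ n) h
  exact ⟨by simpa [hc] using h, hc⟩

theorem MeasureTheory.Integrable.const_dotProduct (hf : Integrable f μ) (w : ι → ℝ) :
    Integrable (fun x => w ⬝ᵥ f x) μ :=
  (LinearMap.toContinuousLinearMap (dotProductBilin ℝ ℝ w)).integrable_comp hf

theorem integral_const_dotProduct (hf : Integrable f μ) (w : ι → ℝ) :
    ∫ x, w ⬝ᵥ f x ∂μ = w ⬝ᵥ ∫ x, f x ∂μ :=
  (LinearMap.toContinuousLinearMap (dotProductBilin ℝ ℝ w)).integral_comp_comm hf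

theorem MeasureTheory.Integrable.dotProduct_self_sub [IsFiniteMeasure μ] (hf : Integrable f μ)
    (hf2 : Integrable (fun x => f x ⬝ᵥ f x) μ) (c : ι → ℝ) :
    Integrable (fun x => (f x - c) ⬝ᵥ (f x - c)) μ := by
  have hexp : ∀ x, (f x - c) ⬝ᵥ (f x - c) = f x ⬝ᵥ f x - 2 * (c ⬝ᵥ f x) + c ⬝ᵥ c := fun x => by
    simp only [sub_dotProduct, dotProduct_sub, dotProduct_comm c (f x)]; ring
  simp only [hexp]
  exact (hf2.sub ((hf.const_dotProduct c).const_mul 2)).add (integrable_const _)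

theorem MeasureTheory.Integrable.sq_const_dotProduct (hf : Integrable f μ)
    (hf2 : Integrable (fun x => f x ⬝ᵥ f x) μ) (w : ι → ℝ) :
    Integrable (fun x => (w ⬝ᵥ f x) ^ 2) μ := by
  refine (hf2.const_mul (w ⬝ᵥ w)).mono' ((hf.const_dotProduct w).aestronglyMeasurable.pow 2) ?_
  filter_upwards with x
  rw [Real.norm_of_nonneg (sq_nonneg _)]
  exact sq_dotProduct_le _ _

end DotProduct

section Barycenter

variable {E F : Type*} [NormedAddCommGroup E] [NormedSpace ℝ E] [FiniteDimensional ℝ E]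
  [MeasurableSpace E] [NormedAddCommGroup F] [NormedSpace ℝ F] [CompleteSpace F]
  {μ : Measure E} [IsFiniteMeasure μ] {xf : E}

theorem integral_const_add_linearMap_sub (hint : Integrable (fun x => x - xf) μ)
    (hbary : ∫ x, (x - xf) ∂μ = 0) (b : F) (A : E →ₗ[ℝ] F) :
    ∫ x, b + A (x - xf) ∂μ = μ.real Set.univ • b := by
  let L := LinearMap.toContinuousLinearMap A
  change ∫ x, b + L (x - xf) ∂μ = _
  rw [integral_add (integrable_const b) (L.integrable_comp hint), integral_const,
    L.integral_comp_comm hint, hbary, map_zero, add_zero]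

theorem eq_zero_of_forall_integral_affine_dotProduct_eq_zero {ι : Type*} [Fintype ι]
    (hμ : μ ≠ 0) (hint : Integrable (fun x => x - xf) μ) (hbary : ∫ x, (x - xf) ∂μ = 0)
    (b : ι → ℝ) (A : E →ₗ[ℝ] ι → ℝ) (h : ∀ γ, ∫ x, (b + A (x - xf)) ⬝ᵥ γ ∂μ = 0) : b = 0 := by
  have : NeZero μ := ⟨hμ⟩
  have hψ : Integrable (fun x => b + A (x - xf)) μ :=
    (integrable_const b).add (A.toContinuousLinearMap.integrable_comp hint)
  have hmean : μ.real Set.univ • b = 0 := dotProduct_eq_zero _ fun γ => by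
    rw [← integral_const_add_linearMap_sub hint hbary, dotProduct_comm,
      ← integral_const_dotProduct hψ]
    simpa only [dotProduct_comm γ] using h γ
  exact (smul_eq_zero.mp hmean).resolve_left measureReal_univ_ne_zero

end Barycenter

section CrossProduct

variable {R : Type*} [Field R] {n v w y : Fin 3 → R}

theorem exists_smul_eq_of_cross_eq_zero (hv : v ≠ 0) (h : v ⨯₃ y = 0) : ∃ s : R, s • v = y := by
  by_contra! hy
  exact crossProduct_ne_zero_iff_linearIndependent.mpr ((LinearIndependent.pair_iff' hv).mpr hy) h

theorem cross_cross_eq_smul_of_dotProduct_eq_zero (hy : y ⬝ᵥ n = 0) :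
    w ⨯₃ n ⨯₃ y = (w ⬝ᵥ y) • n := by
  rw [cross_cross_eq_smul_sub_smul, dotProduct_comm n, hy, zero_smul, sub_zero]

theorem cross_dotProduct_cross_of_dotProduct_eq_zero (hn : n ⬝ᵥ n = 1) (hy : y ⬝ᵥ n = 0) :
    n ⨯₃ y ⬝ᵥ n ⨯₃ y = y ⬝ᵥ y := by
  rw [cross_dot_cross, hn, dotProduct_comm n y, hy]
  ring

end CrossProduct

section Plane

variable {μ : Measure (Fin 3 → ℝ)} {c n w : Fin 3 → ℝ}

theorem integral_dotProduct_self_sub_ne_zero (hμ : μ ≠ 0) (hac : μ ≪ μH[2])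
    (hint : Integrable (fun x => (x - c) ⬝ᵥ (x - c)) μ) :
    ∫ x, (x - c) ⬝ᵥ (x - c) ∂μ ≠ 0 := by
  intro h
  apply not_ae_mem_line_of_absolutelyContinuous hμ hac c 0
  filter_upwards [(integral_eq_zero_iff_of_nonneg (fun x => dotProduct_self_nonneg _) hint).mp h]
    with x hx
  exact ⟨0, by simpa [sub_eq_zero, eq_comm] using dotProduct_self_eq_zero.mp hx⟩

theorem integral_sq_dotProduct_sub_ne_zero (hμ : μ ≠ 0) (hac : μ ≪ μH[2])
    (hplane : ∀ᵐ x ∂μ, (x - c) ⬝ᵥ n = 0) (hn : n ⬝ᵥ n = 1) (hwn : w ⬝ᵥ n = 0) (hw : w ≠ 0)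
    (hint : Integrable (fun x => (w ⬝ᵥ (x - c)) ^ 2) μ) :
    ∫ x, (w ⬝ᵥ (x - c)) ^ 2 ∂μ ≠ 0 := by
  intro h
  have hnw : n ⨯₃ w ≠ 0 := fun h0 => hw <| dotProduct_self_eq_zero.mp <| by
    rw [← cross_dotProduct_cross_of_dotProduct_eq_zero hn hwn, h0, zero_dotProduct]
  apply not_ae_mem_line_of_absolutelyContinuous hμ hac c (n ⨯₃ w)
  filter_upwards [(integral_eq_zero_iff_of_nonneg (fun x => sq_nonneg _) hint).mp h, hplane]
    with x hxw hxn
  obtain ⟨s, hs⟩ := exists_smul_eq_of_cross_eq_zero hnw (y := x - c) <| by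
    rw [cross_cross_eq_smul_sub_smul, dotProduct_comm n, hxn, pow_eq_zero_iff two_ne_zero |>.mp hxw,
      zero_smul, zero_smul, sub_zero]
  exact ⟨s, by rw [hs]; abel⟩

end Plane

/-- Single-face content of the unisolvence Lemma 4.1.  Let `n` be a unit vector, `P`
the plane through `x_f` with normal `n`, and `μ` a nonzero finite measure supported in
`P`, absolutely continuous with respect to `μH[2]` restricted to `P`, with barycenter
`x_f`.  Let `ψ(x) = t + a (n × (x − x_f)) + (c₁ + ℓ(x − x_f)) n` with `t ⊥ n` and
`ℓ` linear with `ℓ(n) = 0`.  If `∫ ψ(x) · (γ + δ × (x − x_E)) dμ = 0` for all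
`γ, δ ∈ ℝ³`, then `t = 0`, `a = 0`, `c₁ = 0`, `ℓ = 0`, and `ψ` vanishes identically. -/
theorem stmt9 (n xf xE : Fin 3 → ℝ) (hn : n ⬝ᵥ n = 1)
    (P : Set (Fin 3 → ℝ)) (hP : P = {x : Fin 3 → ℝ | (x - xf) ⬝ᵥ n = 0})
    (μ : Measure (Fin 3 → ℝ)) [IsFiniteMeasure μ] (hμ0 : μ ≠ 0)
    (hsupp : μ Pᶜ = 0)
    (hac : μ ≪ (μH[2] : Measure (Fin 3 → ℝ)).restrict P)
    (hint1 : Integrable (fun x : Fin 3 → ℝ => x) μ)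
    (hint2 : Integrable (fun x : Fin 3 → ℝ => x ⬝ᵥ x) μ)
    (hbary : (∫ x, (x - xf) ∂μ) = 0)
    (t : Fin 3 → ℝ) (ht : t ⬝ᵥ n = 0) (a c₁ : ℝ)
    (ℓ : (Fin 3 → ℝ) →ₗ[ℝ] ℝ) (hℓn : ℓ n = 0)
    (ψ : (Fin 3 → ℝ) → Fin 3 → ℝ)
    (hψ : ∀ x, ψ x = t + a • crossProduct n (x - xf) + (c₁ + ℓ (x - xf)) • n)
    (h0 : ∀ γ δ : Fin 3 → ℝ, ∫ x, (ψ x) ⬝ᵥ (γ + crossProduct δ (x - xE)) ∂μ = 0) :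
    t = 0 ∧ a = 0 ∧ c₁ = 0 ∧ ℓ = 0 ∧ ∀ x, ψ x = 0 := by
  have hy : Integrable (fun x => x - xf) μ := hint1.sub (integrable_const xf)
  have hyy := hint1.dotProduct_self_sub hint2 xf
  have hH : μ ≪ μH[2] := hac.trans (Measure.absolutelyContinuous_of_le Measure.restrict_le_self)
  have hplane : ∀ᵐ x ∂μ, (x - xf) ⬝ᵥ n = 0 :=
    (measure_eq_zero_iff_ae_notMem.mp hsupp).mono fun x hx => by simpa [hP] using hx
  obtain ⟨rfl, rfl⟩ : t = 0 ∧ c₁ = 0 := by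
    refine eq_zero_of_add_smul_eq_zero ht hn <|
      eq_zero_of_forall_integral_affine_dotProduct_eq_zero hμ0 hy hbary _
        (a • crossProduct n + ℓ.smulRight n) fun γ => ?_
    have h := h0 γ 0
    simp only [map_zero, LinearMap.zero_apply, add_zero] at h
    convert h using 4 with x
    simp only [hψ, LinearMap.add_apply, LinearMap.smul_apply, LinearMap.smulRight_apply, add_smul]
    abel
  have hcross : ∀ δ, ∫ x, ψ x ⬝ᵥ δ ⨯₃ (x - xf) ∂μ = 0 := fun δ => by
    simpa only [← map_add, sub_add_sub_cancel'] using h0 (δ ⨯₃ (xE - xf)) δ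
  obtain rfl : a = 0 := by
    refine (mul_eq_zero.mp ?_).resolve_right (integral_dotProduct_self_sub_ne_zero hμ0 hH hyy)
    rw [← integral_const_mul, ← hcross n]
    refine integral_congr_ae (hplane.mono fun x hx => ?_)
    simp only [hψ, zero_add, add_dotProduct, smul_dotProduct, dot_self_cross,
      cross_dotProduct_cross_of_dotProduct_eq_zero hn hx, smul_eq_mul, mul_zero, add_zero]
  obtain ⟨w, rfl⟩ := (dotProductEquiv ℝ (Fin 3)).surjective ℓ
  obtain rfl : w = 0 := by
    by_contra hw
    refine integral_sq_dotProduct_sub_ne_zero hμ0 hH hplane hn (by simpa using hℓn) hw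
      (hy.sq_const_dotProduct hyy w) ?_
    rw [← hcross (w ⨯₃ n)]
    refine integral_congr_ae (hplane.mono fun x hx => ?_)
    simp [hψ, cross_cross_eq_smul_of_dotProduct_eq_zero hx, hn, sq]
  exact ⟨rfl, rfl, rfl, map_zero _, fun x => by simp [hψ]⟩
end

section
/- Let n ∈ ℝ³ with ‖n‖ = 1, let t₁, t₂ ∈ ℝ³ be orthonormal vectors orthogonal to n, let x_f ∈ ℝ³, and let P = { x ∈ ℝ³ : ⟨x − x_f, n⟩ = 0 }. Then the linear map from ℝ⁶ to functions P → ℝ³ sending (b₁, b₂, a, c₁, c₂, c₃) to ψ(x) = b₁ t₁ + b₂ t₂ + a (n × (x − x_f)) + (c₁ + c₂ ⟨x − x_f, t₁⟩ + c₃ ⟨x − x_f, t₂⟩) n is injective. Consequently, the face traction space T_h(f) of such functions on P is a linear space of dimension exactly 6. -/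
open Matrix

set_option maxHeartbeats 1000000

/-- Let `n` be a unit vector, `t₁, t₂` orthonormal vectors orthogonal to `n`, and `P`
the plane through `x_f` with normal `n`.  The linear map from `ℝ⁶` to functions
`P → ℝ³` sending `(b₁, b₂, a, c₁, c₂, c₃)` to
`ψ(x) = b₁ t₁ + b₂ t₂ + a (n × (x − x_f)) + (c₁ + c₂ ⟨x − x_f, t₁⟩ + c₃ ⟨x − x_f, t₂⟩) n`
is injective; consequently the face traction space `T_h(f)` (its range) has dimension
exactly `6`. -/
theorem stmt10 (n t₁ t₂ xf : Fin 3 → ℝ)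
    (hn : n ⬝ᵥ n = 1) (ht₁ : t₁ ⬝ᵥ t₁ = 1) (ht₂ : t₂ ⬝ᵥ t₂ = 1)
    (ht₁₂ : t₁ ⬝ᵥ t₂ = 0) (ht₁n : t₁ ⬝ᵥ n = 0) (ht₂n : t₂ ⬝ᵥ n = 0)
    (P : Set (Fin 3 → ℝ)) (hP : P = {x : Fin 3 → ℝ | (x - xf) ⬝ᵥ n = 0}) :
    ∃ L : (Fin 6 → ℝ) →ₗ[ℝ] (P → Fin 3 → ℝ),
      (∀ (c : Fin 6 → ℝ) (x : P),
        L c x = c 0 • t₁ + c 1 • t₂ + c 2 • crossProduct n ((x : Fin 3 → ℝ) - xf) +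
          (c 3 + c 4 * (((x : Fin 3 → ℝ) - xf) ⬝ᵥ t₁)
               + c 5 * (((x : Fin 3 → ℝ) - xf) ⬝ᵥ t₂)) • n) ∧
      Function.Injective L ∧
      Module.finrank ℝ (LinearMap.range L) = 6 := by
  let L : (Fin 6 → ℝ) →ₗ[ℝ] (P → Fin 3 → ℝ) := {
    toFun := fun c x => c 0 • t₁ + c 1 • t₂ + c 2 • crossProduct n ((x : Fin 3 → ℝ) - xf) +
      (c 3 + c 4 * (((x : Fin 3 → ℝ) - xf) ⬝ᵥ t₁)
           + c 5 * (((x : Fin 3 → ℝ) - xf) ⬝ᵥ t₂)) • n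
    map_add' := by
      intro c d
      funext x i
      simp only [Pi.add_apply, Pi.smul_apply, smul_eq_mul]
      ring
    map_smul' := by
      intro r c
      funext x i
      simp only [Pi.add_apply, Pi.smul_apply, smul_eq_mul, RingHom.id_apply]
      ring }
  have hLspec : ∀ (c : Fin 6 → ℝ) (x : P),
      L c x = c 0 • t₁ + c 1 • t₂ + c 2 • crossProduct n ((x : Fin 3 → ℝ) - xf) +
        (c 3 + c 4 * (((x : Fin 3 → ℝ) - xf) ⬝ᵥ t₁)
             + c 5 * (((x : Fin 3 → ℝ) - xf) ⬝ᵥ t₂)) • n := fun c x => rfl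
  have hinj : Function.Injective L := by
    rw [← LinearMap.ker_eq_bot, LinearMap.ker_eq_bot']
    intro c hc
    have hx0 : xf ∈ P := by rw [hP]; simp
    have hx1 : xf + t₁ ∈ P := by
      rw [hP]; simp only [Set.mem_setOf_eq, add_sub_cancel_left]; exact ht₁n
    have hx2 : xf + t₂ ∈ P := by
      rw [hP]; simp only [Set.mem_setOf_eq, add_sub_cancel_left]; exact ht₂n
    have E0 : c 0 • t₁ + c 1 • t₂ + c 3 • n = 0 := by
      have h := congrFun hc ⟨xf, hx0⟩
      rw [hLspec] at h
      simpa using h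
    have E1 : c 0 • t₁ + c 1 • t₂ + c 2 • crossProduct n t₁ + (c 3 + c 4) • n = 0 := by
      have h := congrFun hc ⟨xf + t₁, hx1⟩
      rw [hLspec] at h
      simpa [add_sub_cancel_left, ht₁, ht₁₂] using h
    have E2 : c 0 • t₁ + c 1 • t₂ + c 2 • crossProduct n t₂ + (c 3 + c 5) • n = 0 := by
      have h := congrFun hc ⟨xf + t₂, hx2⟩
      rw [hLspec] at h
      simpa [add_sub_cancel_left, ht₂, dotProduct_comm t₂ t₁, ht₁₂] using h
    have d0 : c 0 = 0 := by
      have h := congrArg (fun v => v ⬝ᵥ t₁) E0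
      simpa [add_dotProduct, smul_dotProduct, zero_dotProduct, ht₁,
        dotProduct_comm t₂ t₁, ht₁₂, dotProduct_comm n t₁, ht₁n] using h
    have d1 : c 1 = 0 := by
      have h := congrArg (fun v => v ⬝ᵥ t₂) E0
      simpa [add_dotProduct, smul_dotProduct, zero_dotProduct, ht₂,
        ht₁₂, dotProduct_comm n t₂, ht₂n] using h
    have d3 : c 3 = 0 := by
      have h := congrArg (fun v => v ⬝ᵥ n) E0
      simpa [add_dotProduct, smul_dotProduct, zero_dotProduct, hn, ht₁n, ht₂n] using h
    have d4 : c 4 = 0 := by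
      have h := congrArg (fun v => v ⬝ᵥ n) E1
      have hcn : crossProduct n t₁ ⬝ᵥ n = 0 := by
        rw [dotProduct_comm]; exact dot_self_cross n t₁
      simpa [add_dotProduct, smul_dotProduct, zero_dotProduct, hn, ht₁n, ht₂n,
        hcn, d0, d1, d3] using h
    have d5 : c 5 = 0 := by
      have h := congrArg (fun v => v ⬝ᵥ n) E2
      have hcn : crossProduct n t₂ ⬝ᵥ n = 0 := by
        rw [dotProduct_comm]; exact dot_self_cross n t₂
      simpa [add_dotProduct, smul_dotProduct, zero_dotProduct, hn, ht₁n, ht₂n,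
        hcn, d0, d1, d3] using h
    have d2 : c 2 = 0 := by
      have h : (c 0 • t₁ + c 1 • t₂ + c 2 • crossProduct n t₁ + (c 3 + c 4) • n)
          ⬝ᵥ crossProduct n t₁ = 0 := by rw [E1, zero_dotProduct]
      have h1 : t₁ ⬝ᵥ crossProduct n t₁ = 0 := dot_cross_self n t₁
      have h2 : t₂ ⬝ᵥ crossProduct n t₁ = t₂ ⬝ᵥ crossProduct n t₁ := rfl
      have h3 : n ⬝ᵥ crossProduct n t₁ = 0 := dot_self_cross n t₁
      have h4 : crossProduct n t₁ ⬝ᵥ crossProduct n t₁ = 1 := by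
        rw [cross_dot_cross, hn, ht₁, dotProduct_comm n t₁, ht₁n]
        ring
      simp only [add_dotProduct, smul_dotProduct, zero_dotProduct, h1, h3, h4,
        d0, d1, d3, d4, smul_eq_mul] at h
      linarith
    funext i
    fin_cases i <;> simp_all
  refine ⟨L, hLspec, hinj, ?_⟩
  rw [LinearMap.finrank_range_of_inj hinj, Module.finrank_fin_fun]
end
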